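/- arXiv:1312.5169 — 4 statements merged into one kernel-verified Lean document; each statement's English description precedes it below -/
import Mathlib

section
/- (Gluing Lemma for Ising networks.) Let X = I +_T J be the gluing of Ising nets (I, E_I) and (J, E_J) along a shared vertex subset T. If (I, E_I) and (J, E_J) are compatible, i.e. there exist a ground state φ₀ of (I, E_I) and a ground state ψ₀ of (J, E_J) agreeing on T, then the ground states of the glued net X are precisely those configurations s : I ∪ J → Bool such that s|_I is a ground state of (I, E_I) and s|_J is a ground state of (J, E_J). -/
/-- A ground state of an Ising net `(I, E)` is a configuration at which the
energy function `E` attains its minimum. -/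
def IsGround {ι : Type*} (E : (ι → Bool) → ℝ) (s : ι → Bool) : Prop :=
  ∀ t, E s ≤ E t

/-- **The Gluing Lemma for Ising networks.**
Let `X = I +_T J` be the gluing of Ising nets `(I, E_I)` and `(J, E_J)` along a
shared vertex subset `T` (so `I` and `J` are disjoint outside `T`, and the glued
energy on `I ∪ J` is `E_X(s) = E_I(s|_I) + E_J(s|_J)`).  If the nets are
compatible, i.e. there exist ground states `φ₀` of `(I, E_I)` and `ψ₀` of
`(J, E_J)` agreeing on `T`, then the ground states of the glued net are
precisely those configurations `s : I ∪ J → Bool` whose restrictions to `I`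
and `J` are ground states of `(I, E_I)` and `(J, E_J)` respectively. -/
theorem gluing_lemma {V : Type*} [Finite V] (I J T : Set V)
    (hTI : T ⊆ I) (hTJ : T ⊆ J) (hIJ : I ∩ J = T)
    (EI : (I → Bool) → ℝ) (EJ : (J → Bool) → ℝ)
    (EX : ((I ∪ J : Set V) → Bool) → ℝ)
    (hEX : ∀ s, EX s = EI (fun i => s ⟨i.1, Set.mem_union_left J i.2⟩)
                     + EJ (fun j => s ⟨j.1, Set.mem_union_right I j.2⟩))
    (φ₀ : I → Bool) (ψ₀ : J → Bool)
    (hφ₀ : IsGround EI φ₀) (hψ₀ : IsGround EJ ψ₀)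
    (hagree : ∀ x (hx : x ∈ T), φ₀ ⟨x, hTI hx⟩ = ψ₀ ⟨x, hTJ hx⟩) :
    ∀ s : (I ∪ J : Set V) → Bool,
      IsGround EX s ↔
        (IsGround EI (fun i => s ⟨i.1, Set.mem_union_left J i.2⟩) ∧
         IsGround EJ (fun j => s ⟨j.1, Set.mem_union_right I j.2⟩)) := by
  classical
  intro s
  constructor
  · intro hs
    set s₀ : (I ∪ J : Set V) → Bool := fun x =>
      if h : (x : V) ∈ I then φ₀ ⟨x, h⟩ else ψ₀ ⟨x, x.2.resolve_left h⟩ with hs₀def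
    have hI0 : (fun i : I => s₀ ⟨i.1, Set.mem_union_left J i.2⟩) = φ₀ := by
      funext i; simp [hs₀def, i.2]
    have hJ0 : (fun j : J => s₀ ⟨j.1, Set.mem_union_right I j.2⟩) = ψ₀ := by
      funext j
      by_cases h : (j : V) ∈ I
      · have hT : (j : V) ∈ T := by rw [← hIJ]; exact ⟨h, j.2⟩
        simp only [hs₀def, dif_pos h]
        exact hagree j.1 hT
      · simp [hs₀def, h]
    have h0 : EX s₀ = EI φ₀ + EJ ψ₀ := by rw [hEX s₀, hI0, hJ0]
    have h3 := hs s₀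
    rw [h0, hEX s] at h3
    have h1 := hφ₀ (fun i : I => s ⟨i.1, Set.mem_union_left J i.2⟩)
    have h2 := hψ₀ (fun j : J => s ⟨j.1, Set.mem_union_right I j.2⟩)
    constructor
    · intro t; have := hφ₀ t; linarith
    · intro t; have := hψ₀ t; linarith
  · rintro ⟨h1, h2⟩ t
    rw [hEX s, hEX t]
    exact add_le_add (h1 _) (h2 _)
end

section
/- Let X = I +_T J be the gluing of Ising nets (I, E_I) and (J, E_J) along a shared vertex subset T. If (I, E_I) and (J, E_J) are compatible, then the ground-state energy of the glued net is the sum of the ground-state energies of the parts: E⁰_X = E⁰_I + E⁰_J. -/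
/-- **Ground-state energy of a glued Ising net.**
Let `X = I +_T J` be the gluing of Ising nets `(I, E_I)` and `(J, E_J)` along a
shared vertex subset `T`.  If the nets are compatible, i.e. there exist ground
states `φ₀` of `(I, E_I)` and `ψ₀` of `(J, E_J)` agreeing on `T`, then the
ground-state energy of the glued net is the sum of the ground-state energies of
the parts: `E⁰_X = E⁰_I + E⁰_J`. -/
theorem glued_ground_state_energy {V : Type*} [Finite V] (I J T : Set V)
    (hTI : T ⊆ I) (hTJ : T ⊆ J) (hIJ : I ∩ J = T)
    (EI : (I → Bool) → ℝ) (EJ : (J → Bool) → ℝ)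
    (EX : ((I ∪ J : Set V) → Bool) → ℝ)
    (hEX : ∀ s, EX s = EI (fun i => s ⟨i.1, Set.mem_union_left J i.2⟩)
                     + EJ (fun j => s ⟨j.1, Set.mem_union_right I j.2⟩))
    (φ₀ : I → Bool) (ψ₀ : J → Bool)
    (hφ₀ : IsGround EI φ₀) (hψ₀ : IsGround EJ ψ₀)
    (hagree : ∀ x (hx : x ∈ T), φ₀ ⟨x, hTI hx⟩ = ψ₀ ⟨x, hTJ hx⟩) :
    (⨅ s, EX s) = (⨅ s, EI s) + (⨅ s, EJ s) := by
  classical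
  set s₀ : (I ∪ J : Set V) → Bool := fun x =>
    if h : x.1 ∈ I then φ₀ ⟨x.1, h⟩ else ψ₀ ⟨x.1, x.2.resolve_left h⟩ with hs₀
  have hresI : (fun i : I => s₀ ⟨i.1, Set.mem_union_left J i.2⟩) = φ₀ := by
    funext i; simp [hs₀, i.2]
  have hresJ : (fun j : J => s₀ ⟨j.1, Set.mem_union_right I j.2⟩) = ψ₀ := by
    funext j
    by_cases h : j.1 ∈ I
    · have hT : j.1 ∈ T := hIJ ▸ ⟨h, j.2⟩
      simp [hs₀, h, hagree j.1 hT]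
    · simp [hs₀, h]
  have hEXs₀ : EX s₀ = EI φ₀ + EJ ψ₀ := by rw [hEX, hresI, hresJ]
  have h1 : ⨅ s, EI s = EI φ₀ :=
    IsLeast.csInf_eq ⟨Set.mem_range_self _, by rintro _ ⟨t, rfl⟩; exact hφ₀ t⟩
  have h2 : ⨅ s, EJ s = EJ ψ₀ :=
    IsLeast.csInf_eq ⟨Set.mem_range_self _, by rintro _ ⟨t, rfl⟩; exact hψ₀ t⟩
  have h3 : ⨅ s, EX s = EX s₀ := by
    refine IsLeast.csInf_eq ⟨Set.mem_range_self _, ?_⟩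
    rintro _ ⟨t, rfl⟩
    show EX s₀ ≤ EX t
    rw [hEXs₀, hEX t]
    exact add_le_add (hφ₀ _) (hψ₀ _)
  rw [h1, h2, h3, hEXs₀]
end

section
/- Let X = I +_T J be the gluing of Ising nets (I, E_I) and (J, E_J) along a shared vertex subset T. Then E⁰_X = E⁰_I + E⁰_J holds if and only if (I, E_I) and (J, E_J) are compatible. -/
/-- **Additivity of ground-state energy characterizes compatibility.**
Let `X = I +_T J` be the gluing of Ising nets `(I, E_I)` and `(J, E_J)` along a
shared vertex subset `T`.  Then `E⁰_X = E⁰_I + E⁰_J` holds if and only if the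
nets are compatible, i.e. there exist ground states `φ₀` of `(I, E_I)` and
`ψ₀` of `(J, E_J)` agreeing on `T`. -/
theorem glued_energy_additive_iff_compatible {V : Type*} [Finite V] (I J T : Set V)
    (hTI : T ⊆ I) (hTJ : T ⊆ J) (hIJ : I ∩ J = T)
    (EI : (I → Bool) → ℝ) (EJ : (J → Bool) → ℝ)
    (EX : ((I ∪ J : Set V) → Bool) → ℝ)
    (hEX : ∀ s, EX s = EI (fun i => s ⟨i.1, Set.mem_union_left J i.2⟩)
                     + EJ (fun j => s ⟨j.1, Set.mem_union_right I j.2⟩)) :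
    (⨅ s, EX s) = (⨅ s, EI s) + (⨅ s, EJ s) ↔
      ∃ (φ₀ : I → Bool) (ψ₀ : J → Bool), IsGround EI φ₀ ∧ IsGround EJ ψ₀ ∧
        ∀ x (hx : x ∈ T), φ₀ ⟨x, hTI hx⟩ = ψ₀ ⟨x, hTJ hx⟩ := by
  classical
  have bddI : BddBelow (Set.range EI) := (Set.finite_range EI).bddBelow
  have bddJ : BddBelow (Set.range EJ) := (Set.finite_range EJ).bddBelow
  have bddX : BddBelow (Set.range EX) := (Set.finite_range EX).bddBelow
  obtain ⟨sX, hsX⟩ := Finite.exists_min EX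
  obtain ⟨sI, hsI⟩ := Finite.exists_min EI
  obtain ⟨sJ, hsJ⟩ := Finite.exists_min EJ
  have hIeq : (⨅ s, EI s) = EI sI := le_antisymm (ciInf_le bddI sI) (le_ciInf hsI)
  have hJeq : (⨅ s, EJ s) = EJ sJ := le_antisymm (ciInf_le bddJ sJ) (le_ciInf hsJ)
  have hXeq : (⨅ s, EX s) = EX sX := le_antisymm (ciInf_le bddX sX) (le_ciInf hsX)
  constructor
  · intro h
    set φ : I → Bool := fun i => sX ⟨i.1, Set.mem_union_left J i.2⟩ with hφdef
    set ψ : J → Bool := fun j => sX ⟨j.1, Set.mem_union_right I j.2⟩ with hψdef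
    have hsum : EI φ + EJ ψ = EI sI + EJ sJ := by
      rw [hXeq, hEX sX, hIeq, hJeq, ← hφdef, ← hψdef] at h
      linarith
    have h1 : EI sI ≤ EI φ := hsI _
    have h2 : EJ sJ ≤ EJ ψ := hsJ _
    have hφg : EI φ = EI sI := by linarith
    have hψg : EJ ψ = EJ sJ := by linarith
    refine ⟨φ, ψ, fun t => by rw [hφg]; exact hsI t,
      fun t => by rw [hψg]; exact hsJ t, fun x hx => rfl⟩
  · rintro ⟨φ₀, ψ₀, hφ, hψ, hagree⟩
    set s : (↥(I ∪ J)) → Bool := fun x =>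
      if h : x.1 ∈ I then φ₀ ⟨x.1, h⟩ else ψ₀ ⟨x.1, x.2.resolve_left h⟩ with hsdef
    have hres1 : (fun i : I => s ⟨i.1, Set.mem_union_left J i.2⟩) = φ₀ :=
      funext fun i => by simp [hsdef, i.2]
    have hres2 : (fun j : J => s ⟨j.1, Set.mem_union_right I j.2⟩) = ψ₀ :=
      funext fun j => by
        by_cases h : j.1 ∈ I
        · simp only [hsdef, dif_pos h]
          have hxT : j.1 ∈ T := hIJ ▸ ⟨h, j.2⟩
          have := hagree j.1 hxT
          exact this
        · simp [hsdef, h]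
    have hXs : EX s = EI φ₀ + EJ ψ₀ := by rw [hEX, hres1, hres2]
    have hle : (⨅ s, EX s) ≤ EI φ₀ + EJ ψ₀ := hXs ▸ ciInf_le bddX s
    have hge : EI sI + EJ sJ ≤ (⨅ s, EX s) :=
      le_ciInf fun t => by rw [hEX t]; exact add_le_add (hsI _) (hsJ _)
    have e1 : EI φ₀ = EI sI := le_antisymm (hφ sI) (hsI φ₀)
    have e2 : EJ ψ₀ = EJ sJ := le_antisymm (hψ sJ) (hsJ ψ₀)
    rw [hIeq, hJeq]
    linarith
end

section
/- (Pushouts imply admissibility.) Let (T, E_T), (I, E_I), (J, E_J) be Ising nets and let s : T → I and t : T → J be injective morphisms of Ising nets. If the span (s, t) admits a pushout in the category of Ising nets, i.e. there is an Ising net (X, E_X) with morphisms u : I → X and v : J → X satisfying u ∘ s = v ∘ t and the pushout universal property, then the span (s, t) is admissible. -/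
/-- A morphism of Ising nets from `(I, E_I)` to `(J, E_J)` is a function
`f : I → J` such that every ground state `x` of `(J, E_J)` restricts along `f`
to a ground state `x ∘ f` of `(I, E_I)`. -/
def IsIsingHom {ι κ : Type*} (Eι : (ι → Bool) → ℝ) (Eκ : (κ → Bool) → ℝ)
    (f : ι → κ) : Prop :=
  ∀ x : κ → Bool, IsGround Eκ x → IsGround Eι (x ∘ f)

/-- **Pushouts imply admissibility.**
Let `(T, E_T)`, `(I, E_I)`, `(J, E_J)` be Ising nets and `s : T → I`,
`t : T → J` injective morphisms of Ising nets.  If the span `(s, t)` admits a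
pushout in the category of Ising nets — an Ising net `(X, E_X)` with morphisms
`u : I → X`, `v : J → X` satisfying `u ∘ s = v ∘ t` and the pushout universal
property — then the span `(s, t)` is admissible: there exist a ground state
`x` of `(I, E_I)` and a ground state `y` of `(J, E_J)` with `x ∘ s = y ∘ t`,
this common configuration of `T` being a ground state of `(T, E_T)`. -/
theorem pushout_implies_admissible {T I J X : Type}
    [Finite T] [Finite I] [Finite J] [Finite X]
    (ET : (T → Bool) → ℝ) (EI : (I → Bool) → ℝ) (EJ : (J → Bool) → ℝ)
    (s : T → I) (t : T → J)
    (hs_inj : Function.Injective s) (ht_inj : Function.Injective t)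
    (hs_hom : IsIsingHom ET EI s) (ht_hom : IsIsingHom ET EJ t)
    (EX : (X → Bool) → ℝ) (u : I → X) (v : J → X)
    (hu : IsIsingHom EI EX u) (hv : IsIsingHom EJ EX v)
    (hcomm : u ∘ s = v ∘ t)
    (huniv : ∀ (Y : Type) (_ : Finite Y) (EY : (Y → Bool) → ℝ)
        (u' : I → Y) (v' : J → Y),
      IsIsingHom EI EY u' → IsIsingHom EJ EY v' → u' ∘ s = v' ∘ t →
      ∃ w : X → Y, IsIsingHom EX EY w ∧ w ∘ u = u' ∧ w ∘ v = v' ∧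
        ∀ w' : X → Y, IsIsingHom EX EY w' → w' ∘ u = u' → w' ∘ v = v' →
          w' = w) :
    ∃ (x : I → Bool) (y : J → Bool),
      IsGround EI x ∧ IsGround EJ y ∧ x ∘ s = y ∘ t ∧ IsGround ET (x ∘ s) := by
  obtain ⟨z, hz⟩ := Finite.exists_min EX
  have hzg : IsGround EX z := hz
  refine ⟨z ∘ u, z ∘ v, hu z hzg, hv z hzg, ?_, ?_⟩
  · show z ∘ (u ∘ s) = z ∘ (v ∘ t)
    rw [hcomm]
  · exact hs_hom (z ∘ u) (hu z hzg)
end
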